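/- arXiv:2605.24422 — 3 statements merged into one kernel-verified Lean document; each statement's English description precedes it below -/
import Mathlib

section
/- Let X be a real random variable supported in [a,b] with CDF F, let j ≥ 2 be an integer, and let x, y ∈ [a,b]. Then Cov( (x − X)₊^{j-1}/(j-1)!, (y − X)₊^{j-1}/(j-1)! ) = (1/((j-2)!)²) ∫_a^x ∫_a^y (x − t)^{j-2} (y − s)^{j-2} ( F(min(t,s)) − F(t)·F(s) ) ds dt. (This identity gives the variance V_j^A(x) for x = y and the covariance kernel of the correlation function r^A(x,y) of the limiting Gaussian process in Theorem 3.1.) -/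
/-!
For `a ≤ c` one has `(z - c)₊^(k+1) / (k+1)! = ∫_a^z (z - t)^k / k! · 1{c ≤ t} dt`, so both
factors of the covariance are integrals of the indicator process `t ↦ 1{X ≤ t}` against a
deterministic weight. Fubini moves the expectation inside, where `E 1{X ≤ t} = F t` and
`E 1{X ≤ t} 1{X ≤ s} = F (min t s)`.
-/

open MeasureTheory Set

section IndicatorProcess

variable {Ω β : Type*} [MeasurableSpace Ω] [MeasurableSpace β] {μ : Measure Ω} {X : Ω → ℝ}

lemma integral_indicator_Iic_comp (hX : Measurable X) (t : ℝ) :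
    ∫ ω, (Iic t).indicator (1 : ℝ → ℝ) (X ω) ∂μ = μ.real {ω | X ω ≤ t} := by
  simp_rw [← indicator_comp_right X (g := (1 : ℝ → ℝ))]
  exact integral_indicator_one (hX measurableSet_Iic)

lemma measurable_indicator_Iic_comp (hX : Measurable X) {τ : β → ℝ} (hτ : Measurable τ) :
    Measurable fun q : Ω × β => (Iic (τ q.2)).indicator (1 : ℝ → ℝ) (X q.1) := by
  simp only [indicator_apply, mem_Iic, Pi.one_apply]
  exact Measurable.ite (measurableSet_le (hX.comp measurable_fst) (hτ.comp measurable_snd))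
    measurable_const measurable_const

variable [IsFiniteMeasure μ]

lemma MeasureTheory.Integrable.mul_measureReal_setOf_le {ν : Measure β} {f τ : β → ℝ}
    (hf : Integrable f ν) (hτ : Measurable τ) :
    Integrable (fun p => f p * μ.real {ω | X ω ≤ τ p}) ν := by
  have hmono : Monotone fun t => μ.real {ω | X ω ≤ t} :=
    fun s t hst => measureReal_mono fun ω hω => le_trans hω hst
  refine hf.mul_bdd (hmono.measurable.comp hτ).aestronglyMeasurable (c := μ.real univ)
    (ae_of_all _ fun p => ?_)
  rw [Real.norm_of_nonneg measureReal_nonneg]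
  exact measureReal_mono (subset_univ _)

lemma integral_integral_mul_indicator_Iic (hX : Measurable X) {ν : Measure β}
    [SFinite ν] {f τ : β → ℝ} (hf : Integrable f ν) (hτ : Measurable τ) :
    ∫ ω, ∫ p, f p * (Iic (τ p)).indicator 1 (X ω) ∂ν ∂μ
      = ∫ p, f p * μ.real {ω | X ω ≤ τ p} ∂ν := by
  have hint : Integrable
      (Function.uncurry fun ω p => f p * (Iic (τ p)).indicator (1 : ℝ → ℝ) (X ω)) (μ.prod ν) :=
    (hf.comp_snd μ).mul_bdd (measurable_indicator_Iic_comp hX hτ).aestronglyMeasurable (c := 1)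
      (ae_of_all _ fun q => (norm_indicator_le_norm_self _ _).trans norm_one.le)
  rw [integral_integral_swap hint]
  refine integral_congr_ae (ae_of_all _ fun p => ?_)
  simp only [integral_const_mul, integral_indicator_Iic_comp hX]

theorem integral_mul_sub_integral_mul_integral_indicator_Iic (hX : Measurable X)
    {ν₁ ν₂ : Measure ℝ} [SFinite ν₁] [SFinite ν₂] {f g : ℝ → ℝ} (hf : Integrable f ν₁)
    (hg : Integrable g ν₂) :
    (∫ ω, (∫ t, f t * (Iic t).indicator 1 (X ω) ∂ν₁)
        * (∫ s, g s * (Iic s).indicator 1 (X ω) ∂ν₂) ∂μ)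
      - (∫ ω, ∫ t, f t * (Iic t).indicator 1 (X ω) ∂ν₁ ∂μ)
        * (∫ ω, ∫ s, g s * (Iic s).indicator 1 (X ω) ∂ν₂ ∂μ)
      = ∫ t, ∫ s, f t * g s
          * (μ.real {ω | X ω ≤ min t s} - μ.real {ω | X ω ≤ t} * μ.real {ω | X ω ≤ s}) ∂ν₂ ∂ν₁ := by
  have hmin : Measurable fun p : ℝ × ℝ => min p.1 p.2 := measurable_fst.min measurable_snd
  have hprod : ∀ ω (p : ℝ × ℝ),
      f p.1 * (Iic p.1).indicator 1 (X ω) * (g p.2 * (Iic p.2).indicator 1 (X ω))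
      = f p.1 * g p.2 * (Iic (min p.1 p.2)).indicator (1 : ℝ → ℝ) (X ω) := by
    intro ω p
    rw [← Iic_inter_Iic, inter_indicator_one, Pi.mul_apply]
    ring
  have hmoment₂ : ∀ ω, (∫ t, f t * (Iic t).indicator 1 (X ω) ∂ν₁)
      * (∫ s, g s * (Iic s).indicator 1 (X ω) ∂ν₂)
      = ∫ p, f p.1 * g p.2 * (Iic (min p.1 p.2)).indicator 1 (X ω) ∂(ν₁.prod ν₂) := fun ω => by
    rw [← integral_prod_mul]
    simp only [hprod]
  have hjoint := (hf.mul_prod hg).mul_measureReal_setOf_le (μ := μ) (X := X) hmin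
  have hsep := (hf.mul_measureReal_setOf_le (μ := μ) (X := X) measurable_id').mul_prod
    (hg.mul_measureReal_setOf_le (μ := μ) (X := X) measurable_id')
  rw [integral_congr_ae (ae_of_all _ hmoment₂),
    integral_integral_mul_indicator_Iic hX (hf.mul_prod hg) hmin,
    integral_integral_mul_indicator_Iic (τ := fun t => t) hX hf measurable_id',
    integral_integral_mul_indicator_Iic (τ := fun t => t) hX hg measurable_id',
    ← integral_prod_mul, ← integral_sub hjoint hsep]
  refine (integral_prod _ (hjoint.sub hsep)).trans ?_
  refine integral_congr_ae (ae_of_all _ fun t => integral_congr_ae (ae_of_all _ fun s => ?_))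
  simp only [Pi.sub_apply]
  ring

end IndicatorProcess

lemma setIntegral_Ioc_sub_pow (k : ℕ) (c z : ℝ) :
    ∫ t in Ioc c z, (z - t) ^ k = max (z - c) 0 ^ (k + 1) / (k + 1) := by
  rcases le_or_gt c z with hcz | hzc
  · rw [← intervalIntegral.integral_of_le hcz, intervalIntegral.integral_comp_sub_left
      (fun u => u ^ k) z, integral_pow, max_eq_left (sub_nonneg.2 hcz)]
    simp
  · rw [Ioc_eq_empty (not_lt.2 hzc.le), Measure.restrict_empty, integral_zero_measure,
      max_eq_right (sub_nonpos.2 hzc.le)]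
    simp

lemma max_sub_pow_div_factorial_eq_setIntegral {a c : ℝ} (hac : a ≤ c) (z : ℝ) (k : ℕ) :
    max (z - c) 0 ^ (k + 1) / ((k + 1).factorial : ℝ)
      = ∫ t in Ioc a z, (z - t) ^ k / k.factorial * (Iic t).indicator 1 c := by
  have hind : (fun t => (z - t) ^ k / k.factorial * (Iic t).indicator (1 : ℝ → ℝ) c)
      = (Ici c).indicator fun t => (z - t) ^ k / k.factorial := by
    ext t
    by_cases hct : c ≤ t <;> simp [hct]
  have hset : (Ici c ∩ Ioc a z : Set ℝ) =ᵐ[volume] Ioc c z := by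
    rw [show Ioc c z = Ioi c ∩ Ioc a z by rw [inter_comm, Ioc_inter_Ioi, max_eq_right hac]]
    exact Ioi_ae_eq_Ici.symm.inter (ae_eq_refl _)
  rw [hind, integral_indicator measurableSet_Ici, Measure.restrict_restrict measurableSet_Ici,
    setIntegral_congr_set hset, integral_div, setIntegral_Ioc_sub_pow, Nat.factorial_succ]
  push_cast
  field_simp

/-- Covariance kernel of the higher-order ASD test statistic: for `j ≥ 2`,
`Cov((x−X)₊^{j-1}/(j-1)!, (y−X)₊^{j-1}/(j-1)!)
  = (1/((j-2)!)²) ∫_a^x ∫_a^y (x−t)^{j-2}(y−s)^{j-2}(F(min(t,s)) − F(t)F(s)) ds dt`,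
where the covariance is written as `E[AB] − E[A]·E[B]`. -/
theorem covariance_kernel_higher_order_ASD
    {Ω : Type*} [MeasurableSpace Ω] (μ : Measure Ω) [IsProbabilityMeasure μ]
    (a b : ℝ) (X : Ω → ℝ) (hX : Measurable X)
    (hsupp : ∀ᵐ ω ∂μ, X ω ∈ Set.Icc a b)
    (F : ℝ → ℝ) (hF : ∀ t, F t = (μ {ω | X ω ≤ t}).toReal)
    (j : ℕ) (hj : 2 ≤ j) (x y : ℝ) (hx : x ∈ Set.Icc a b) (hy : y ∈ Set.Icc a b) :
    (∫ ω, (max (x - X ω) 0 ^ (j - 1) / (Nat.factorial (j - 1) : ℝ))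
        * (max (y - X ω) 0 ^ (j - 1) / (Nat.factorial (j - 1) : ℝ)) ∂μ)
      - (∫ ω, max (x - X ω) 0 ^ (j - 1) / (Nat.factorial (j - 1) : ℝ) ∂μ)
        * (∫ ω, max (y - X ω) 0 ^ (j - 1) / (Nat.factorial (j - 1) : ℝ) ∂μ)
      = (1 / (Nat.factorial (j - 2) : ℝ) ^ 2)
          * ∫ t in a..x, ∫ s in a..y,
              (x - t) ^ (j - 2) * (y - s) ^ (j - 2) * (F (min t s) - F t * F s) := by
  obtain ⟨k, rfl⟩ : ∃ k, j = k + 2 := ⟨j - 2, by omega⟩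
  obtain rfl : F = fun t => μ.real {ω | X ω ≤ t} := funext fun t => hF t
  have hrepr (z : ℝ) : (fun ω => max (z - X ω) 0 ^ (k + 1) / ((k + 1).factorial : ℝ))
      =ᵐ[μ] fun ω => ∫ t in Ioc a z, (z - t) ^ k / k.factorial * (Iic t).indicator 1 (X ω) :=
    hsupp.mono fun ω hω => max_sub_pow_div_factorial_eq_setIntegral hω.1 z k
  have hweight (z : ℝ) : IntegrableOn (fun t => (z - t) ^ k / k.factorial) (Ioc a z) :=
    (by fun_prop : Continuous _).integrableOn_Ioc
  simp only [Nat.add_sub_cancel, show k + 2 - 1 = k + 1 by omega]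
  rw [integral_congr_ae ((hrepr x).fun_mul (hrepr y)), integral_congr_ae (hrepr x),
    integral_congr_ae (hrepr y),
    integral_mul_sub_integral_mul_integral_indicator_Iic hX (hweight x) (hweight y),
    intervalIntegral.integral_of_le hx.1, ← integral_const_mul]
  congr 1 with t
  rw [intervalIntegral.integral_of_le hy.1, ← integral_const_mul]
  congr 1 with s
  field_simp
end

section
/- Let X and Y be random variables supported in [a,b] with CDFs F and G. If F_2^A(x) ≤ G_2^A(x) for all x ∈ [a,b], where F_2^A(x) = ∫_a^x F(t) dt and G_2^A(x) = ∫_a^x G(t) dt (second-order ascending stochastic dominance of X over Y), then E[u(X)] ≥ E[u(Y)] for every nondecreasing concave function u : ℝ → ℝ. (Second-order ASD implies that every risk-averse investor attains higher expected utility from the dominant asset.) -/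
/-!
Let `φ` be the right derivative of `u`: it is antitone, nonnegative, and `u b - u x = ∫_x^b φ`.
Exchanging the order of integration gives `E[u X] = u b - ∫_a^b F φ`, so
`E[u X] - E[u Y] = ∫_a^b (G - F) φ`. Writing `φ t = ∫_0^{φ a} 1[s < φ t] ds` and using Fubini once
more, this is an average over `s` of `∫ (G - F)` over `{φ > s} ∩ [a, b]`, which is an interval
starting at `a` up to a null set, so each such integral is nonnegative by dominance.
-/

open MeasureTheory intervalIntegral Set

namespace ConcaveOn

variable {u : ℝ → ℝ}

lemma hasDerivWithinAt_rightDeriv (hu : ConcaveOn ℝ univ u) (x : ℝ) :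
    HasDerivWithinAt u (derivWithin u (Ioi x) x) (Ioi x) x := by
  have := (hu.neg.differentiableWithinAt_Ioi_of_mem_interior (x := x) (by simp)).neg
  simp only [neg_neg] at this
  exact this.hasDerivWithinAt

lemma antitone_rightDeriv (hu : ConcaveOn ℝ univ u) :
    Antitone fun x ↦ derivWithin u (Ioi x) x := by
  intro x y hxy
  have := hu.neg.monotoneOn_rightDeriv (by simp : x ∈ interior univ) (by simp) hxy
  simpa [derivWithin.neg] using this

lemma integral_rightDeriv_eq_sub (hu : ConcaveOn ℝ univ u) {x y : ℝ} (hxy : x ≤ y) :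
    ∫ t in x..y, derivWithin u (Ioi t) t = u y - u x :=
  integral_eq_sub_of_hasDeriv_right_of_le hxy ((hu.continuousOn isOpen_univ).mono (subset_univ _))
    (fun t _ ↦ hu.hasDerivWithinAt_rightDeriv t) hu.antitone_rightDeriv.intervalIntegrable

end ConcaveOn

section CDF

variable {Ω : Type*} [MeasurableSpace Ω] {μ : Measure Ω} {X : Ω → ℝ} {φ u : ℝ → ℝ} {a b : ℝ}

lemma monotone_measureReal_le (μ : Measure Ω) [IsFiniteMeasure μ] (X : Ω → ℝ) :
    Monotone fun t ↦ μ.real {ω | X ω ≤ t} :=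
  fun _ _ hst ↦ measureReal_mono fun _ hω ↦ le_trans hω hst

lemma integrable_indicator_Ici_prod [IsFiniteMeasure μ] (hX : Measurable X)
    (hφ : IntegrableOn φ (Icc a b)) :
    Integrable (fun p : Ω × ℝ ↦ (Ici (X p.1)).indicator φ p.2)
      (μ.prod (volume.restrict (Icc a b))) :=
  (hφ.comp_snd μ).indicator (s := {p : Ω × ℝ | X p.1 ≤ p.2})
    (measurableSet_le (hX.comp measurable_fst) measurable_snd)

lemma integral_indicator_Ici_eq_measureReal_mul (hX : Measurable X) (t : ℝ) :
    ∫ ω, (Ici (X ω)).indicator φ t ∂μ = μ.real {ω | X ω ≤ t} * φ t := by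
  have : (fun ω ↦ (Ici (X ω)).indicator φ t) = {ω | X ω ≤ t}.indicator fun _ ↦ φ t := by
    ext ω; simp [indicator_apply]
  rw [this, integral_indicator_const _ (measurableSet_le hX measurable_const), smul_eq_mul]

lemma setIntegral_indicator_Ici_eq {x : ℝ} (hx : x ∈ Icc a b) :
    ∫ t in Icc a b, (Ici x).indicator φ t = ∫ t in x..b, φ t := by
  have hset : Icc a b ∩ Ici x = Icc x b := by
    ext t
    simp only [mem_inter_iff, mem_Icc, mem_Ici]
    constructor
    · exact fun h ↦ ⟨h.2, h.1.2⟩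
    · exact fun h ↦ ⟨⟨hx.1.trans h.1, h.2⟩, h.1⟩
  rw [setIntegral_indicator measurableSet_Ici, hset, integral_of_le hx.2,
    integral_Icc_eq_integral_Ioc]

lemma integrableOn_measureReal_le_mul [IsFiniteMeasure μ] (hX : Measurable X)
    (hφ : IntegrableOn φ (Icc a b)) :
    IntegrableOn (fun t ↦ μ.real {ω | X ω ≤ t} * φ t) (Icc a b) := by
  have h := (integrable_indicator_Ici_prod (μ := μ) hX hφ).integral_prod_right
  simp only [integral_indicator_Ici_eq_measureReal_mul hX] at h
  exact h

lemma integral_comp_eq_sub_setIntegral_measureReal_le_mul [IsProbabilityMeasure μ]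
    (hX : Measurable X) (hXab : ∀ᵐ ω ∂μ, X ω ∈ Icc a b) (hφ : IntegrableOn φ (Icc a b))
    (hu : ∀ x ∈ Icc a b, u b - u x = ∫ t in x..b, φ t) :
    ∫ ω, u (X ω) ∂μ = u b - ∫ t in Icc a b, μ.real {ω | X ω ≤ t} * φ t := by
  have hk := integrable_indicator_Ici_prod (μ := μ) hX hφ
  have hcomp : (fun ω ↦ u (X ω)) =ᵐ[μ]
      fun ω ↦ u b - ∫ t in Icc a b, (Ici (X ω)).indicator φ t := by
    filter_upwards [hXab] with ω hω
    rw [setIntegral_indicator_Ici_eq hω, ← hu _ hω, sub_sub_cancel]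
  rw [integral_congr_ae hcomp, integral_sub (integrable_const _) hk.integral_prod_left,
    MeasureTheory.integral_const,
    integral_integral_swap (f := fun ω t ↦ (Ici (X ω)).indicator φ t) hk]
  simp only [integral_indicator_Ici_eq_measureReal_mul hX, probReal_univ, one_smul]

end CDF

section LayerCake

variable {a b : ℝ}

lemma IsLowerSet.Icc_inter_ae_eq_Ioc {T : Set ℝ} (hT : IsLowerSet T)
    (hne : (Icc a b ∩ T).Nonempty) : ∃ m ∈ Icc a b, (Icc a b ∩ T : Set ℝ) =ᵐ[volume] Ioc a m := by
  have hbdd : BddAbove (Icc a b ∩ T) := ⟨b, fun t ht ↦ ht.1.2⟩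
  obtain ⟨t₀, ht₀⟩ := hne
  set m := sSup (Icc a b ∩ T)
  have hsub : Icc a b ∩ T ⊆ Icc a m := fun t ht ↦ ⟨ht.1.1, le_csSup hbdd ht⟩
  have hsup : Ioo a m ⊆ Icc a b ∩ T := fun t ht ↦ by
    obtain ⟨s, hs, hts⟩ := exists_lt_of_lt_csSup ⟨t₀, ht₀⟩ ht.2
    exact ⟨⟨ht.1.le, hts.le.trans hs.1.2⟩, hT hts.le hs.2⟩
  refine ⟨m, ⟨ht₀.1.1.trans (le_csSup hbdd ht₀), csSup_le ⟨t₀, ht₀⟩ fun t ht ↦ ht.1.2⟩, ?_⟩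
  exact (hsub.eventuallyLE.trans Ioc_ae_eq_Icc.symm.le).antisymm
    (Ioo_ae_eq_Ioc.symm.le.trans hsup.eventuallyLE)

lemma IsLowerSet.setIntegral_Icc_inter_nonneg {T : Set ℝ} {h : ℝ → ℝ} (hT : IsLowerSet T)
    (hH : ∀ x ∈ Icc a b, 0 ≤ ∫ t in a..x, h t) : 0 ≤ ∫ t in Icc a b ∩ T, h t := by
  rcases (Icc a b ∩ T).eq_empty_or_nonempty with hempty | hne
  · simp [hempty]
  obtain ⟨m, hm, hae⟩ := hT.Icc_inter_ae_eq_Ioc hne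
  rw [setIntegral_congr_set hae, ← integral_of_le hm.1]
  exact hH m hm

lemma setIntegral_Ico_indicator_Iio_const {c x : ℝ} (hx : x ∈ Icc 0 c) (y : ℝ) :
    ∫ s in Ico 0 c, (Iio x).indicator (fun _ ↦ y) s = x * y := by
  rw [integral_indicator_const _ measurableSet_Iio, measureReal_restrict_apply measurableSet_Iio,
    inter_comm, Ico_inter_Iio, min_eq_right hx.2, Real.volume_real_Ico_of_le hx.1, sub_zero,
    smul_eq_mul]

lemma setIntegral_mul_antitone_nonneg {h φ : ℝ → ℝ} (hh : IntegrableOn h (Icc a b))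
    (hφ : Antitone φ) (hφb : 0 ≤ φ b) (hH : ∀ x ∈ Icc a b, 0 ≤ ∫ t in a..x, h t) :
    0 ≤ ∫ t in Icc a b, h t * φ t := by
  let k : ℝ → ℝ → ℝ := fun t s ↦ {t' | s < φ t'}.indicator h t
  have hk : Integrable (Function.uncurry k)
      ((volume.restrict (Icc a b)).prod (volume.restrict (Ico 0 (φ a)))) :=
    (hh.comp_fst _).indicator (s := {p : ℝ × ℝ | p.2 < φ p.1})
      (measurableSet_lt measurable_snd (hφ.measurable.comp measurable_fst))
  calc 0 ≤ ∫ s in Ico 0 (φ a), ∫ t in Icc a b, k t s := by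
        refine integral_nonneg fun s ↦ ?_
        rw [setIntegral_indicator (measurableSet_lt measurable_const hφ.measurable)]
        exact IsLowerSet.setIntegral_Icc_inter_nonneg
          (fun x y hyx hx ↦ lt_of_lt_of_le hx (hφ hyx)) hH
    _ = ∫ t in Icc a b, ∫ s in Ico 0 (φ a), k t s := (integral_integral_swap hk).symm
    _ = ∫ t in Icc a b, h t * φ t := by
        refine setIntegral_congr_fun measurableSet_Icc fun t ht ↦ ?_
        have : k t = (Iio (φ t)).indicator fun _ ↦ h t := by ext s; simp [k, indicator_apply]
        rw [this, setIntegral_Ico_indicator_Iio_const ⟨hφb.trans (hφ ht.2), hφ ht.1⟩, mul_comm]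

end LayerCake

/-- Second-order ascending stochastic dominance of `X` over `Y` implies that every
risk-averse investor (nondecreasing concave utility `u`) attains higher expected
utility from `X` than from `Y`. -/
theorem SASD_implies_expected_utility_riskAverse
    {Ω : Type*} [MeasurableSpace Ω] (μ ν : Measure Ω)
    [IsProbabilityMeasure μ] [IsProbabilityMeasure ν]
    (a b : ℝ) (X Y : Ω → ℝ) (hX : Measurable X) (hY : Measurable Y)
    (hXsupp : ∀ᵐ ω ∂μ, X ω ∈ Set.Icc a b) (hYsupp : ∀ᵐ ω ∂ν, Y ω ∈ Set.Icc a b)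
    (F G : ℝ → ℝ)
    (hF : ∀ t, F t = (μ {ω | X ω ≤ t}).toReal)
    (hG : ∀ t, G t = (ν {ω | Y ω ≤ t}).toReal)
    (hdom : ∀ x ∈ Set.Icc a b, (∫ t in a..x, F t) ≤ ∫ t in a..x, G t) :
    ∀ u : ℝ → ℝ, Monotone u → ConcaveOn ℝ Set.univ u →
      (∫ ω, u (Y ω) ∂ν) ≤ ∫ ω, u (X ω) ∂μ := by
  intro u hu_mono hu_conc
  have hF_mono : Monotone F := by rw [funext hF]; exact monotone_measureReal_le μ X
  have hG_mono : Monotone G := by rw [funext hG]; exact monotone_measureReal_le ν Y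
  set φ := fun t ↦ derivWithin u (Ioi t) t
  have hφ : Antitone φ := hu_conc.antitone_rightDeriv
  have hφ_int : IntegrableOn φ (Icc a b) := (hφ.antitoneOn _).integrableOn_isCompact isCompact_Icc
  have hu : ∀ x ∈ Icc a b, u b - u x = ∫ t in x..b, φ t :=
    fun x hx ↦ (hu_conc.integral_rightDeriv_eq_sub hx.2).symm
  have hGF : 0 ≤ ∫ t in Icc a b, (G t - F t) * φ t := by
    refine setIntegral_mul_antitone_nonneg
      (((hG_mono.monotoneOn _).integrableOn_isCompact isCompact_Icc).sub
        ((hF_mono.monotoneOn _).integrableOn_isCompact isCompact_Icc))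
      hφ ((hu_mono.monotoneOn _).derivWithin_nonneg) fun x hx ↦ ?_
    rw [integral_sub hG_mono.intervalIntegrable hF_mono.intervalIntegrable, sub_nonneg]
    exact hdom x hx
  obtain rfl : F = fun t ↦ μ.real {ω | X ω ≤ t} := funext hF
  obtain rfl : G = fun t ↦ ν.real {ω | Y ω ≤ t} := funext hG
  simp only [sub_mul] at hGF
  rw [integral_sub (integrableOn_measureReal_le_mul hY hφ_int)
    (integrableOn_measureReal_le_mul hX hφ_int)] at hGF
  rw [integral_comp_eq_sub_setIntegral_measureReal_le_mul hX hXsupp hφ_int hu,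
    integral_comp_eq_sub_setIntegral_measureReal_le_mul hY hYsupp hφ_int hu]
  linarith
end

section
/- Let X and Y be random variables supported in [a,b] with CDFs F and G. If F_2^D(x) ≥ G_2^D(x) for all x ∈ [a,b], where F_2^D(x) = ∫_x^b (1 − F(t)) dt and G_2^D(x) = ∫_x^b (1 − G(t)) dt (second-order descending stochastic dominance of X over Y), then E[u(X)] ≥ E[u(Y)] for every nondecreasing convex function u : ℝ → ℝ. (Second-order DSD implies that every risk-seeking investor attains higher expected utility from the dominant asset.) -/
/-!
Write `φ` for the right derivative of `u`; it is nonnegative and nondecreasing, and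
`u x = u a + ∫_a^x φ`. By Tonelli, `E[u X] - u a = ∫_a^b φ(t) P(X > t) dt`, i.e. the integral of
`φ` against the measure `ρ_X` with density `P(X > t)` on `(a, b]`, and `ρ_X (x, ∞) = F_2^D(x)`.
Dominance says `ρ_Y ≤ ρ_X` on every ray `(x, ∞)`, hence on every upper set, in particular on the
superlevel sets of `φ`; the layer-cake formula then gives `∫ φ dρ_Y ≤ ∫ φ dρ_X`.
-/

open MeasureTheory intervalIntegral Set
open scoped ENNReal

theorem measure_le_measure_of_isUpperSet {ρ₁ ρ₂ : Measure ℝ} [NullSingletonClass ρ₂]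
    (h : ∀ x, ρ₂ (Ioi x) ≤ ρ₁ (Ioi x)) {s : Set ℝ} (hs : IsUpperSet s) : ρ₂ s ≤ ρ₁ s := by
  by_cases hbdd : BddBelow s
  · rcases s.eq_empty_or_nonempty with rfl | hne
    · simp
    have hIoi : Ioi (sInf s) ⊆ s := fun y hy => by
      obtain ⟨z, hz, hzy⟩ := exists_lt_of_csInf_lt hne hy
      exact hs hzy.le hz
    calc ρ₂ s ≤ ρ₂ (Ici (sInf s)) := measure_mono fun y hy => csInf_le hbdd hy
      _ = ρ₂ (Ioi (sInf s)) := measure_congr Ioi_ae_eq_Ici.symm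
      _ ≤ ρ₁ (Ioi (sInf s)) := h _
      _ ≤ ρ₁ s := measure_mono hIoi
  · have hs_univ : s = univ := eq_univ_of_forall fun y => by
      obtain ⟨z, hz, hzy⟩ := not_bddBelow_iff.1 hbdd y
      exact hs hzy.le hz
    have hmono : Monotone fun n : ℕ => Ioi (-(n : ℝ)) := fun m n hmn =>
      Ioi_subset_Ioi (neg_le_neg (Nat.cast_le.2 hmn))
    have hunion : (⋃ n : ℕ, Ioi (-(n : ℝ))) = univ := eq_univ_of_forall fun y => by
      obtain ⟨n, hn⟩ := exists_nat_gt (-y)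
      exact mem_iUnion.2 ⟨n, neg_lt.1 hn⟩
    rw [hs_univ, ← hunion, hmono.measure_iUnion, hunion]
    exact iSup_le fun n => (h _).trans (measure_mono (subset_univ _))

theorem lintegral_ofReal_le_of_measure_Ioi_le {ρ₁ ρ₂ : Measure ℝ} [NullSingletonClass ρ₂]
    (h : ∀ x, ρ₂ (Ioi x) ≤ ρ₁ (Ioi x)) {φ : ℝ → ℝ} (hφ : Monotone φ) (hφ₀ : 0 ≤ φ) :
    ∫⁻ x, ENNReal.ofReal (φ x) ∂ρ₂ ≤ ∫⁻ x, ENNReal.ofReal (φ x) ∂ρ₁ := by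
  rw [lintegral_eq_lintegral_meas_lt ρ₂ (ae_of_all _ hφ₀) hφ.measurable.aemeasurable,
    lintegral_eq_lintegral_meas_lt ρ₁ (ae_of_all _ hφ₀) hφ.measurable.aemeasurable]
  exact lintegral_mono fun t =>
    measure_le_measure_of_isUpperSet h fun x y hxy hx => hx.trans_le (hφ hxy)

theorem ConvexOn.monotone_rightDeriv {u : ℝ → ℝ} (hu : ConvexOn ℝ univ u) :
    Monotone fun x => derivWithin u (Ioi x) x :=
  monotoneOn_univ.1 (by simpa using hu.monotoneOn_rightDeriv)

theorem ConvexOn.integral_rightDeriv_eq_sub {u : ℝ → ℝ} (hu : ConvexOn ℝ univ u) {x y : ℝ}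
    (hxy : x ≤ y) : ∫ t in x..y, derivWithin u (Ioi t) t = u y - u x :=
  integral_eq_sub_of_hasDeriv_right_of_le hxy hu.locallyLipschitz.continuous.continuousOn
    (fun t _ => hu.hasDerivWithinAt_rightDeriv_of_mem_interior (by simp))
    hu.monotone_rightDeriv.intervalIntegrable

noncomputable def survivalMeasure {Ω : Type*} [MeasurableSpace Ω] (μ : Measure Ω) (X : Ω → ℝ)
    (a b : ℝ) : Measure ℝ :=
  (volume.restrict (Ioc a b)).withDensity fun t => μ {ω | t < X ω}

section
variable {Ω : Type*} [MeasurableSpace Ω] {μ ν : Measure Ω} {X Y : Ω → ℝ} {a b : ℝ}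

instance : NullSingletonClass (survivalMeasure μ X a b) := by
  unfold survivalMeasure
  infer_instance

theorem antitone_measure_lt (μ : Measure Ω) (X : Ω → ℝ) : Antitone fun t => μ {ω | t < X ω} :=
  fun _ _ hst => measure_mono fun _ hω => hst.trans_lt hω

theorem survivalMeasure_Ioi (x : ℝ) :
    survivalMeasure μ X a b (Ioi x) = ∫⁻ t in Ioc (max a x) b, μ {ω | t < X ω} := by
  rw [survivalMeasure, withDensity_apply _ measurableSet_Ioi,
    Measure.restrict_restrict measurableSet_Ioi, inter_comm, Ioc_inter_Ioi]

theorem setLIntegral_measure_lt_eq_ofReal [IsProbabilityMeasure μ] (hX : Measurable X) {c d : ℝ}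
    (hcd : c ≤ d) :
    ∫⁻ t in Ioc c d, μ {ω | t < X ω} =
      ENNReal.ofReal (∫ t in c..d, (1 - (μ {ω | X ω ≤ t}).toReal)) := by
  have hcompl : ∀ t, 1 - (μ {ω | X ω ≤ t}).toReal = (μ {ω | t < X ω}).toReal := fun t => by
    rw [← measureReal_def, ← measureReal_def,
      ← probReal_compl_eq_one_sub (measurableSet_le hX measurable_const), compl_ofPred]
    simp only [not_le]
  have hfin : ∫⁻ t in Ioc c d, μ {ω | t < X ω} ≠ ∞ :=
    (setLIntegral_lt_top_of_le_nnreal measure_Ioc_lt_top.ne ⟨1, fun t _ => prob_le_one⟩).ne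
  simp_rw [hcompl, integral_of_le hcd]
  rw [integral_toReal (antitone_measure_lt μ X).measurable.aemeasurable
    (ae_of_all _ fun t => measure_lt_top μ _), ENNReal.ofReal_toReal hfin]

theorem survivalMeasure_Ioi_le [IsProbabilityMeasure μ] [IsProbabilityMeasure ν]
    (hX : Measurable X) (hY : Measurable Y)
    (hdom : ∀ x ∈ Icc a b, ∫ t in x..b, (1 - (ν {ω | Y ω ≤ t}).toReal) ≤
      ∫ t in x..b, (1 - (μ {ω | X ω ≤ t}).toReal)) (x : ℝ) :
    survivalMeasure ν Y a b (Ioi x) ≤ survivalMeasure μ X a b (Ioi x) := by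
  rw [survivalMeasure_Ioi, survivalMeasure_Ioi]
  rcases le_or_gt (max a x) b with h | h
  · rw [setLIntegral_measure_lt_eq_ofReal hY h, setLIntegral_measure_lt_eq_ofReal hX h]
    exact ENNReal.ofReal_le_ofReal (hdom _ ⟨le_max_left _ _, h⟩)
  · simp [Ioc_eq_empty_of_le h.le]

theorem setLIntegral_indicator_Iio_eq_ofReal_integral {φ : ℝ → ℝ} {x : ℝ}
    (hφ : IntervalIntegrable φ volume a x) (hφ₀ : 0 ≤ φ) (hax : a ≤ x) (hxb : x ≤ b) :
    ∫⁻ t in Ioc a b, (Iio x).indicator (fun t => ENNReal.ofReal (φ t)) t =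
      ENNReal.ofReal (∫ t in a..x, φ t) := by
  have hIoo : Iio x ∩ Ioc a b = Ioo a x :=
    Set.ext fun t => ⟨fun h => ⟨h.2.1, h.1⟩, fun h => ⟨h.2, h.1, h.2.le.trans hxb⟩⟩
  rw [lintegral_indicator measurableSet_Iio, Measure.restrict_restrict measurableSet_Iio, hIoo,
    setLIntegral_congr Ioo_ae_eq_Ioc, integral_of_le hax,
    ofReal_integral_eq_lintegral_ofReal ((intervalIntegrable_iff_integrableOn_Ioc_of_le hax).1 hφ)
      (ae_of_all _ hφ₀)]

theorem lintegral_survivalMeasure [SFinite μ] (hX : Measurable X)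
    (hXab : ∀ᵐ ω ∂μ, X ω ∈ Icc a b) {u φ : ℝ → ℝ} (hφ : Monotone φ) (hφ₀ : 0 ≤ φ)
    (hu : ∀ x ∈ Icc a b, ∫ t in a..x, φ t = u x - u a) :
    ∫⁻ t, ENNReal.ofReal (φ t) ∂survivalMeasure μ X a b =
      ∫⁻ ω, ENNReal.ofReal (u (X ω) - u a) ∂μ := by
  set g : ℝ → ℝ≥0∞ := fun t => ENNReal.ofReal (φ t)
  have hg : Measurable g := ENNReal.measurable_ofReal.comp hφ.measurable
  have hmeas : Measurable (Function.uncurry fun t ω => {ω | t < X ω}.indicator (fun _ => g t) ω) :=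
    (hg.comp measurable_fst).indicator (measurableSet_lt measurable_fst (hX.comp measurable_snd))
  rw [survivalMeasure,
    lintegral_withDensity_eq_lintegral_mul _ (antitone_measure_lt μ X).measurable hg]
  calc ∫⁻ t in Ioc a b, μ {ω | t < X ω} * g t
      = ∫⁻ t in Ioc a b, ∫⁻ ω, {ω | t < X ω}.indicator (fun _ => g t) ω ∂μ := by
        refine lintegral_congr fun t => ?_
        rw [lintegral_indicator_const (measurableSet_lt measurable_const hX), mul_comm]
    _ = ∫⁻ ω, (∫⁻ t in Ioc a b, {ω | t < X ω}.indicator (fun _ => g t) ω) ∂μ :=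
        lintegral_lintegral_swap hmeas.aemeasurable
    _ = ∫⁻ ω, ENNReal.ofReal (u (X ω) - u a) ∂μ := lintegral_congr_ae <| hXab.mono fun ω hω => by
        dsimp only
        rw [← hu _ hω]
        exact setLIntegral_indicator_Iio_eq_ofReal_integral hφ.intervalIntegrable hφ₀ hω.1 hω.2

theorem Monotone.integrable_comp [IsFiniteMeasure μ] {u : ℝ → ℝ} (hu : Monotone u)
    (hX : AEMeasurable X μ) (hXab : ∀ᵐ ω ∂μ, X ω ∈ Icc a b) : Integrable (fun ω => u (X ω)) μ :=
  .of_bound (hu.measurable.comp_aemeasurable hX).aestronglyMeasurable (max |u a| |u b|)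
    (hXab.mono fun _ hω => abs_le_max_abs_abs (hu hω.1) (hu hω.2))

theorem integral_comp_eq_add_toReal_lintegral [IsProbabilityMeasure μ] {u : ℝ → ℝ}
    (hu : Monotone u) (hX : AEMeasurable X μ) (hXab : ∀ᵐ ω ∂μ, X ω ∈ Icc a b) :
    ∫ ω, u (X ω) ∂μ = u a + (∫⁻ ω, ENNReal.ofReal (u (X ω) - u a) ∂μ).toReal := by
  have hint := hu.integrable_comp hX hXab
  rw [← integral_eq_lintegral_of_nonneg_ae (hXab.mono fun _ hω => sub_nonneg.2 (hu hω.1))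
    (hint.sub (integrable_const _)).aestronglyMeasurable, integral_sub hint (integrable_const _)]
  simp

end

/-- Second-order descending stochastic dominance of `X` over `Y` implies that every
risk-seeking investor (nondecreasing convex utility `u`) attains higher expected
utility from `X` than from `Y`. -/
theorem SDSD_implies_expected_utility_riskSeeking
    {Ω : Type*} [MeasurableSpace Ω] (μ ν : Measure Ω)
    [IsProbabilityMeasure μ] [IsProbabilityMeasure ν]
    (a b : ℝ) (X Y : Ω → ℝ) (hX : Measurable X) (hY : Measurable Y)
    (hXsupp : ∀ᵐ ω ∂μ, X ω ∈ Set.Icc a b) (hYsupp : ∀ᵐ ω ∂ν, Y ω ∈ Set.Icc a b)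
    (F G : ℝ → ℝ)
    (hF : ∀ t, F t = (μ {ω | X ω ≤ t}).toReal)
    (hG : ∀ t, G t = (ν {ω | Y ω ≤ t}).toReal)
    (hdom : ∀ x ∈ Set.Icc a b, (∫ t in x..b, (1 - G t)) ≤ ∫ t in x..b, (1 - F t)) :
    ∀ u : ℝ → ℝ, Monotone u → ConvexOn ℝ Set.univ u →
      (∫ ω, u (Y ω) ∂ν) ≤ ∫ ω, u (X ω) ∂μ := by
  intro u hu_mono hu_conv
  obtain rfl : F = _ := funext hF
  obtain rfl : G = _ := funext hG
  have hφ := hu_conv.monotone_rightDeriv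
  have hφ₀ : 0 ≤ fun t => derivWithin u (Ioi t) t :=
    fun _ => (hu_mono.monotoneOn _).derivWithin_nonneg
  have hftc : ∀ x ∈ Icc a b, ∫ t in a..x, derivWithin u (Ioi t) t = u x - u a :=
    fun x hx => hu_conv.integral_rightDeriv_eq_sub hx.1
  have key := lintegral_ofReal_le_of_measure_Ioi_le (survivalMeasure_Ioi_le hX hY hdom) hφ hφ₀
  rw [lintegral_survivalMeasure hX hXsupp hφ hφ₀ hftc,
    lintegral_survivalMeasure hY hYsupp hφ hφ₀ hftc] at key
  have hfin := ((hu_mono.integrable_comp hX.aemeasurable hXsupp).sub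
    (integrable_const (u a))).lintegral_lt_top.ne
  rw [integral_comp_eq_add_toReal_lintegral hu_mono hX.aemeasurable hXsupp,
    integral_comp_eq_add_toReal_lintegral hu_mono hY.aemeasurable hYsupp]
  exact add_le_add_right (ENNReal.toReal_mono hfin key) _
end
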